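/- arXiv:1402.0946 — 2 statements merged into one kernel-verified Lean document; each statement's English description precedes it below -/
import Mathlib

section
/- Let X be a complex Banach space and let s be a positive integer. If A ∈ B(X) is a bounded operator with A² = 0 and rank at least three, then there exists a bounded operator B ∈ B(X) of rank at most three such that the peripheral spectrum of A B^s + B^s A equals {1, e^{2πi/3}, e^{4πi/3}}, the set of cube roots of unity. -/
open scoped ENNReal

/-- The peripheral spectrum of a bounded operator: the set of spectral values of
maximal modulus. -/
noncomputable def pSpec {X : Type*} [NormedAddCommGroup X] [NormedSpace ℂ X]
    (T : X →L[ℂ] X) : Set ℂ :=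
  {z ∈ spectrum ℂ T | (‖z‖₊ : ℝ≥0∞) = spectralRadius ℂ T}

/-- The rank of a bounded operator: the dimension of its range. -/
noncomputable def opRank {X Y : Type*} [NormedAddCommGroup X] [NormedSpace ℂ X]
    [NormedAddCommGroup Y] [NormedSpace ℂ Y] (T : X →L[ℂ] Y) : Cardinal :=
  Module.rank ℂ (LinearMap.range (T : X →ₗ[ℂ] Y))

/-- A standard operator algebra on `X`: a subalgebra of `B(X)` containing all bounded
finite-rank operators. -/
def IsStandardOpAlg {X : Type*} [NormedAddCommGroup X] [NormedSpace ℂ X]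
    (𝒜 : Subalgebra ℂ (X →L[ℂ] X)) : Prop :=
  ∀ T : X →L[ℂ] X, opRank T < Cardinal.aleph0 → T ∈ 𝒜

/-- The set `I₁(X)` of rank-one idempotents, i.e. operators `x ⊗ f` with `f x = 1`. -/
def rankOneIdem (X : Type*) [NormedAddCommGroup X] [NormedSpace ℂ X] :
    Set (X →L[ℂ] X) :=
  {P | ∃ (f : X →L[ℂ] ℂ) (x : X), f x = 1 ∧ P = f.smulRight x}

/-- The Banach-space adjoint (dual) operator `A* : X* → X*`, `f ↦ f ∘ A`. -/
noncomputable def dualOp {X : Type*} [NormedAddCommGroup X] [NormedSpace ℂ X]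
    (A : X →L[ℂ] X) : StrongDual ℂ X →L[ℂ] StrongDual ℂ X :=
  (ContinuousLinearMap.compL ℂ X X ℂ).flip A

/-!
Choose `u₀, u₁, u₂` with `vⱼ = A uⱼ` independent. Since `A² = 0` the six vectors `uⱼ, vⱼ` are
independent, so there are functionals `fᵢ` with `fᵢ uⱼ = 0` and `fᵢ vⱼ = δᵢⱼ`. Then
`B = ∑ᵢ fᵢ ⊗ (u_{i+1} + vᵢ)` is an idempotent of rank at most three, so `Bˢ = B`, and
`C = AB + BA` maps everything into `W = span {uⱼ, vⱼ}` and acts there by `C uⱼ = u_{j+1} + vⱼ`,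
`C vⱼ = v_{j+1}` (indices mod 3): a cyclic shift on each block, coupled by the identity. Hence
`(C³ - 1)²` kills `W`, so `σ(C) ⊆ {0} ∪ {z | z³ = 1}`, while every cube root of unity `μ` is an
eigenvalue with eigenvector `v₀ + μ² v₁ + μ v₂`.
-/

open Complex in
theorem setOf_pow_three_eq_one :
    {z : ℂ | z ^ 3 = 1} = {1, exp (2 * Real.pi * I / 3), exp (4 * Real.pi * I / 3)} := by
  have hζ : IsPrimitiveRoot (exp (2 * Real.pi * I / 3)) 3 := by
    exact_mod_cast isPrimitiveRoot_exp 3 three_ne_zero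
  have hsq : exp (4 * Real.pi * I / 3) = exp (2 * Real.pi * I / 3) ^ 2 := by
    rw [← exp_nat_mul]; congr 1; push_cast; ring
  ext z
  simp only [Set.mem_ofPred_eq, Set.mem_insert_iff, Set.mem_singleton_iff, hsq]
  constructor
  · intro hz
    obtain ⟨i, hi, rfl⟩ := hζ.eq_pow_of_pow_eq_one hz
    interval_cases i <;> simp
  · rintro (rfl | rfl | rfl)
    · exact one_pow 3
    · exact hζ.pow_eq_one
    · rw [pow_right_comm, hζ.pow_eq_one, one_pow]

theorem spectrum.eval_eq_zero_of_aeval_eq_zero {𝕜 A : Type*} [Field 𝕜] [Ring A] [Algebra 𝕜 A]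
    {a : A} {p : Polynomial 𝕜} (hp : Polynomial.aeval a p = 0) {z : 𝕜} (hz : z ∈ spectrum 𝕜 a) :
    p.eval z = 0 := by
  cases subsingleton_or_nontrivial A
  · simp [spectrum.of_subsingleton] at hz
  simpa [hp, spectrum.zero_eq] using spectrum.subset_polynomial_aeval a p ⟨z, hz, rfl⟩

theorem spectrum.eq_zero_or_pow_eq_one {𝕜 A : Type*} [Field 𝕜] [Ring A] [Algebra 𝕜 A]
    {a : A} {n k : ℕ} (ha : (a ^ n - 1) ^ k * a = 0) {z : 𝕜} (hz : z ∈ spectrum 𝕜 a) :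
    z = 0 ∨ z ^ n = 1 := by
  have := spectrum.eval_eq_zero_of_aeval_eq_zero
    (p := (Polynomial.X ^ n - 1) ^ k * Polynomial.X) (by simpa using ha) hz
  simp only [Polynomial.eval_mul, Polynomial.eval_pow, Polynomial.eval_sub, Polynomial.eval_X,
    Polynomial.eval_one, mul_eq_zero] at this
  rcases this with h | h
  exacts [Or.inr (sub_eq_zero.1 (eq_zero_of_pow_eq_zero h)), Or.inl h]

theorem ContinuousLinearMap.mem_spectrum_of_apply_eq_smul {R M : Type*} [CommRing R]
    [TopologicalSpace M] [AddCommGroup M] [Module R M] [IsTopologicalAddGroup M]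
    [ContinuousConstSMul R M] {T : M →L[R] M} {μ : R} {w : M} (hw : w ≠ 0) (hTw : T w = μ • w) :
    μ ∈ spectrum R T := by
  intro hunit
  have hev : Module.End.HasEigenvalue (T : Module.End R M) μ :=
    Module.End.hasEigenvalue_of_hasEigenvector ⟨Module.End.mem_eigenspace_iff.mpr hTw, hw⟩
  refine hev.mem_spectrum ?_
  simpa [spectrum.mem_resolventSet_iff, Algebra.algebraMap_eq_smul_one] using
    hunit.map ContinuousLinearMap.toLinearMapRingHom

theorem pSpec_eq_of_spectrum_subset {X : Type*} [NormedAddCommGroup X] [NormedSpace ℂ X]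
    {T : X →L[ℂ] X} {S : Set ℂ} (hS : ∀ z ∈ S, ‖z‖ = 1) (hne : S.Nonempty)
    (hsub : S ⊆ spectrum ℂ T) (hσ : spectrum ℂ T ⊆ insert 0 S) : pSpec T = S := by
  have hS' : ∀ z ∈ S, (‖z‖₊ : ℝ≥0∞) = 1 := fun z hz => by
    simp [← NNReal.coe_eq_one, hS z hz]
  have hrad : spectralRadius ℂ T = 1 := by
    refine le_antisymm (iSup₂_le fun z hz => ?_) ?_
    · rcases hσ hz with rfl | hz
      · simp
      · exact (hS' z hz).le
    · obtain ⟨z, hz⟩ := hne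
      exact (hS' z hz).symm.le.trans (le_iSup₂ (f := fun k (_ : k ∈ spectrum ℂ T) =>
        (‖k‖₊ : ℝ≥0∞)) z (hsub hz))
  ext z
  simp only [pSpec, hrad, Set.mem_ofPred_eq]
  refine ⟨fun ⟨hzσ, hz1⟩ => ?_, fun hz => ⟨hsub hz, hS' z hz⟩⟩
  rcases hσ hzσ with rfl | hz
  · simp at hz1
  · exact hz

theorem LinearMap.exists_linearIndependent_comp_of_le_rank {K V V' : Type*} [DivisionRing K]
    [AddCommGroup V] [Module K V] [AddCommGroup V'] [Module K V'] {f : V →ₗ[K] V'} {n : ℕ}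
    (h : n ≤ f.rank) : ∃ u : Fin n → V, LinearIndependent K (f ∘ u) := by
  obtain ⟨t, rfl, ht⟩ := LinearMap.le_rank_iff_exists_linearIndependent_finset.1 h
  exact ⟨fun i => t.equivFin.symm i, ht.comp _ t.equivFin.symm.injective⟩

theorem LinearIndependent.sum_elim_of_sq_eq_zero {R M ι : Type*} [Ring R] [AddCommGroup M]
    [Module R M] [Fintype ι] {f : M →ₗ[R] M} (hf : ∀ x, f (f x) = 0) {u : ι → M}
    (hu : LinearIndependent R (f ∘ u)) : LinearIndependent R (Sum.elim u (f ∘ u)) := by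
  rw [Fintype.linearIndependent_iff] at hu ⊢
  intro c hc
  rw [Fintype.sum_sum_type] at hc
  have hl : ∀ i, c (Sum.inl i) = 0 := hu _ (by simpa [map_sum, hf] using congr_arg f hc)
  have hr : ∀ i, c (Sum.inr i) = 0 := hu _ (by simpa [hl] using hc)
  rintro (i | i)
  exacts [hl i, hr i]

theorem LinearIndependent.exists_biorthogonal {𝕜 X ι : Type*} [RCLike 𝕜] [NormedAddCommGroup X]
    [NormedSpace 𝕜 X] [Finite ι] [DecidableEq ι] {w : ι → X} (hw : LinearIndependent 𝕜 w) :
    ∃ f : ι → StrongDual 𝕜 X, ∀ i j, f i (w j) = if i = j then 1 else 0 := by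
  let b := Module.Basis.span hw
  have := FiniteDimensional.span_of_finite 𝕜 (Set.finite_range w)
  obtain ⟨P, hP⟩ :=
    Submodule.ClosedComplemented.of_finiteDimensional (Submodule.span 𝕜 (Set.range w))
  refine ⟨fun i => (LinearMap.toContinuousLinearMap (b.coord i)).comp P, fun i j => ?_⟩
  have hPw : P (w j) = b j := by
    rw [Module.Basis.span_apply]; exact hP ⟨w j, Submodule.subset_span ⟨j, rfl⟩⟩
  simp [hPw, Finsupp.single_apply, eq_comm]

theorem opRank_sum_smulRight_le {X : Type*} [NormedAddCommGroup X] [NormedSpace ℂ X] {n : ℕ}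
    (f : Fin n → StrongDual ℂ X) (z : Fin n → X) :
    opRank (∑ i, (f i).smulRight (z i)) ≤ n := by
  have hrange : LinearMap.range ((∑ i, (f i).smulRight (z i) : X →L[ℂ] X) : X →ₗ[ℂ] X) ≤
      Submodule.span ℂ (Set.range z) := by
    rintro _ ⟨x, rfl⟩
    simpa using Submodule.sum_mem _ fun i _ =>
      Submodule.smul_mem _ (f i x) (Submodule.subset_span (Set.mem_range_self i))
  calc opRank _ ≤ Module.rank ℂ (Submodule.span ℂ (Set.range z)) := Submodule.rank_mono hrange
    _ ≤ Cardinal.mk (Set.range z) := rank_span_le _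
    _ ≤ n := by simpa using Cardinal.mk_range_le_lift (f := z)

section CyclicBlock

variable {X : Type*} [NormedAddCommGroup X] [NormedSpace ℂ X] {C : X →L[ℂ] X} {u v : Fin 3 → X}

theorem pow_three_sub_one_sq_mul_eq_zero (hCu : ∀ j, C (u j) = u (j + 1) + v j)
    (hCv : ∀ j, C (v j) = v (j + 1))
    (hrange : ∀ x, C x ∈ Submodule.span ℂ (Set.range u ∪ Set.range v)) :
    (C ^ 3 - 1) ^ 2 * C = 0 := by
  set D : X →L[ℂ] X := C ^ 3 - 1 with hD
  have h3 : ∀ j : Fin 3, j + 1 + 1 + 1 = j := by decide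
  have hDv : ∀ j, D (v j) = 0 := fun j => by
    simp [hD, pow_succ, mul_apply_eq_comp, hCv, h3]
  have hDu : ∀ j, D (u j) = (3 : ℂ) • v (j + 1 + 1) := fun j => by
    simp only [hD, pow_succ, pow_zero, one_mul, sub_apply, mul_apply_eq_comp, one_apply_eq_self,
      hCu, hCv, map_add, h3]
    module
  have hker : Submodule.span ℂ (Set.range u ∪ Set.range v) ≤
      LinearMap.ker ((D ^ 2 : X →L[ℂ] X) : X →ₗ[ℂ] X) := by
    refine Submodule.span_le.2 ?_
    rintro _ (⟨j, rfl⟩ | ⟨j, rfl⟩) <;> simp [pow_two, hDu, hDv]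
  ext x
  exact hker (hrange x)

theorem mem_spectrum_of_pow_three_eq_one (hv : LinearIndependent ℂ v)
    (hCv : ∀ j, C (v j) = v (j + 1)) {μ : ℂ} (hμ : μ ^ 3 = 1) : μ ∈ spectrum ℂ C := by
  refine ContinuousLinearMap.mem_spectrum_of_apply_eq_smul (w := v 0 + μ ^ 2 • v 1 + μ • v 2)
    (fun h => ?_) ?_
  · simpa using Fintype.linearIndependent_iff.1 hv ![1, μ ^ 2, μ]
      (by simpa [Fin.sum_univ_three] using h) 0
  · simp only [map_add, map_smul, hCv, Fin.reduceAdd]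
    match_scalars <;> grind

theorem pSpec_eq_cube_roots (hv : LinearIndependent ℂ v) (hCu : ∀ j, C (u j) = u (j + 1) + v j)
    (hCv : ∀ j, C (v j) = v (j + 1))
    (hrange : ∀ x, C x ∈ Submodule.span ℂ (Set.range u ∪ Set.range v)) :
    pSpec C = {1, Complex.exp (2 * Real.pi * Complex.I / 3),
      Complex.exp (4 * Real.pi * Complex.I / 3)} := by
  have hann := pow_three_sub_one_sq_mul_eq_zero hCu hCv hrange
  rw [← setOf_pow_three_eq_one]
  refine pSpec_eq_of_spectrum_subset (fun z (hz : z ^ 3 = 1) =>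
      Complex.norm_eq_one_of_pow_eq_one hz three_ne_zero)
    ⟨1, one_pow 3⟩ (fun μ (hμ : μ ^ 3 = 1) => mem_spectrum_of_pow_three_eq_one hv hCv hμ) ?_
  intro z hz
  exact spectrum.eq_zero_or_pow_eq_one hann hz

end CyclicBlock

section CyclicIdempotent

variable {X : Type*} [NormedAddCommGroup X] [NormedSpace ℂ X]

noncomputable def cyclicIdempotent (A : X →L[ℂ] X) (u : Fin 3 → X)
    (f : Fin 3 → StrongDual ℂ X) : X →L[ℂ] X :=
  ∑ i, (f i).smulRight (u (i + 1) + A (u i))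

variable {A : X →L[ℂ] X} {u : Fin 3 → X} {f : Fin 3 → StrongDual ℂ X}

theorem cyclicIdempotent_apply (x : X) :
    cyclicIdempotent A u f x = ∑ i, f i x • (u (i + 1) + A (u i)) := by
  simp [cyclicIdempotent]

theorem cyclicIdempotent_apply_mem_span (x : X) :
    cyclicIdempotent A u f x ∈ Submodule.span ℂ (Set.range u ∪ Set.range (A ∘ u)) := by
  rw [cyclicIdempotent_apply]
  refine Submodule.sum_mem _ fun i _ => Submodule.smul_mem _ _ (Submodule.add_mem _ ?_ ?_) <;>
    apply Submodule.subset_span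
  exacts [Or.inl (Set.mem_range_self _), Or.inr (Set.mem_range_self i)]

theorem cyclicIdempotent_apply_self (hfu : ∀ i j, f i (u j) = 0) (j : Fin 3) :
    cyclicIdempotent A u f (u j) = 0 := by
  simp [cyclicIdempotent_apply, hfu]

theorem cyclicIdempotent_apply_apply_self (hfv : ∀ i j, f i (A (u j)) = if i = j then 1 else 0)
    (j : Fin 3) : cyclicIdempotent A u f (A (u j)) = u (j + 1) + A (u j) := by
  simp [cyclicIdempotent_apply, hfv, Finset.sum_add_distrib]

theorem isIdempotentElem_cyclicIdempotent (hfu : ∀ i j, f i (u j) = 0)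
    (hfv : ∀ i j, f i (A (u j)) = if i = j then 1 else 0) :
    IsIdempotentElem (cyclicIdempotent A u f) := by
  ext x
  simp [mul_apply_eq_comp, cyclicIdempotent_apply x,
    cyclicIdempotent_apply_self hfu, cyclicIdempotent_apply_apply_self hfv]

theorem anticomm_cyclicIdempotent_apply_self (hfu : ∀ i j, f i (u j) = 0)
    (hfv : ∀ i j, f i (A (u j)) = if i = j then 1 else 0) (j : Fin 3) :
    (A * cyclicIdempotent A u f + cyclicIdempotent A u f * A) (u j) = u (j + 1) + A (u j) := by
  simp [mul_apply_eq_comp, cyclicIdempotent_apply_self hfu, cyclicIdempotent_apply_apply_self hfv]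

theorem anticomm_cyclicIdempotent_apply_apply_self (hA : ∀ x, A (A x) = 0)
    (hfv : ∀ i j, f i (A (u j)) = if i = j then 1 else 0) (j : Fin 3) :
    (A * cyclicIdempotent A u f + cyclicIdempotent A u f * A) (A (u j)) = A (u (j + 1)) := by
  simp [mul_apply_eq_comp, cyclicIdempotent_apply_apply_self hfv, hA]

theorem anticomm_cyclicIdempotent_apply_mem_span (hA : ∀ x, A (A x) = 0) (x : X) :
    (A * cyclicIdempotent A u f + cyclicIdempotent A u f * A) x ∈
      Submodule.span ℂ (Set.range u ∪ Set.range (A ∘ u)) := by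
  have hAW : Submodule.span ℂ (Set.range u ∪ Set.range (A ∘ u)) ≤
      (Submodule.span ℂ (Set.range u ∪ Set.range (A ∘ u))).comap (A : X →ₗ[ℂ] X) := by
    refine Submodule.span_le.2 ?_
    rintro _ (⟨j, rfl⟩ | ⟨j, rfl⟩)
    · exact Submodule.subset_span (Or.inr (Set.mem_range_self j))
    · simp [hA]
  exact Submodule.add_mem _ (hAW (cyclicIdempotent_apply_mem_span x))
    (cyclicIdempotent_apply_mem_span (A x))

end CyclicIdempotent

theorem exists_B_pSpec_cube_roots_of_sq_zero_general
    {X : Type*} [NormedAddCommGroup X] [NormedSpace ℂ X]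
    (s : ℕ) (hs : 0 < s) (A : X →L[ℂ] X) (hA2 : A ^ 2 = 0) (hA : 3 ≤ opRank A) :
    ∃ B : X →L[ℂ] X, opRank B ≤ 3 ∧
      pSpec (A * B ^ s + B ^ s * A) =
        {1, Complex.exp (2 * Real.pi * Complex.I / 3),
          Complex.exp (4 * Real.pi * Complex.I / 3)} := by
  have hAA : ∀ x, A (A x) = 0 := fun x => by simpa [pow_two] using congr($hA2 x)
  obtain ⟨u, hu⟩ := LinearMap.exists_linearIndependent_comp_of_le_rank
    (f := (A : X →ₗ[ℂ] X)) (n := 3) (by exact_mod_cast hA)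
  obtain ⟨f, hf⟩ := (hu.sum_elim_of_sq_eq_zero hAA).exists_biorthogonal
  have hfu : ∀ i j, (f ∘ .inr) i (u j) = 0 := fun i j => by simpa using hf (.inr i) (.inl j)
  have hfv : ∀ i j, (f ∘ .inr) i (A (u j)) = if i = j then 1 else 0 := fun i j => by
    simpa using hf (.inr i) (.inr j)
  refine ⟨cyclicIdempotent A u (f ∘ .inr), opRank_sum_smulRight_le _ _, ?_⟩
  rw [(isIdempotentElem_cyclicIdempotent hfu hfv).pow_eq hs.ne']
  exact pSpec_eq_cube_roots hu (anticomm_cyclicIdempotent_apply_self hfu hfv)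
    (anticomm_cyclicIdempotent_apply_apply_self hAA hfv)
    (anticomm_cyclicIdempotent_apply_mem_span hAA)

/-- for a positive integer `s` and a bounded operator `A` with `A² = 0`
of rank at least three on a complex Banach space, there is a bounded operator `B` of
rank at most three such that the peripheral spectrum of `ABˢ + BˢA` is the set of cube
roots of unity `{1, e^{2πi/3}, e^{4πi/3}}`. -/
theorem exists_B_pSpec_cube_roots_of_sq_zero
    {X : Type*} [NormedAddCommGroup X] [NormedSpace ℂ X] [CompleteSpace X]
    (s : ℕ) (hs : 0 < s) (A : X →L[ℂ] X) (hA2 : A ^ 2 = 0) (hA : 3 ≤ opRank A) :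
    ∃ B : X →L[ℂ] X, opRank B ≤ 3 ∧
      pSpec (A * B ^ s + B ^ s * A) =
        {1, Complex.exp (2 * Real.pi * Complex.I / 3),
          Complex.exp (4 * Real.pi * Complex.I / 3)} :=
  exists_B_pSpec_cube_roots_of_sq_zero_general s hs A hA2 hA
end

section
/- Let X be a complex Banach space and let A, A' ∈ B(X) be bounded operators. Suppose that for every x ∈ X and f ∈ X* with f(x) = 1, one has f(Ax) = 0 if and only if f(A'x) = 0. Then A' = λA for some scalar λ ∈ ℂ. -/
open scoped ENNReal

/-!
Fix `x ≠ 0` and suppose `A' x ∉ ℂ ∙ A x`. If also `x ∉ ℂ ∙ A x`, then `x` and `A' x` stay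
nonzero after projecting away the line `ℂ ∙ A x`, so Hahn–Banach gives `f` with `f (A x) = 0`,
`f x = 1` and `f (A' x) ≠ 0`, contradicting the hypothesis. If `x ∈ ℂ ∙ A x`, the same argument
applies with `A` and `A'` swapped. Hence `A' x ∈ ℂ ∙ A x` for every `x`, and a linear map that
is pointwise a multiple of `A` is a single multiple of `A`.
-/

open Submodule

namespace LinearMap

variable {K M N : Type*} [Field K] [AddCommGroup M] [Module K M] [AddCommGroup N] [Module K N]

theorem exists_eq_smul_of_forall_mem_span_singleton {A B : M →ₗ[K] N}
    (h : ∀ x, B x ∈ K ∙ A x) : ∃ c : K, B = c • A := by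
  by_cases hA : A = 0
  · exact ⟨0, ext fun x => by simpa [hA] using h x⟩
  obtain ⟨x₀, hx₀⟩ : ∃ x₀, A x₀ ≠ 0 := by simpa [LinearMap.ext_iff] using hA
  obtain ⟨c, hc⟩ := mem_span_singleton.1 (h x₀)
  set D := B - c • A
  refine ⟨c, sub_eq_zero.1 (ext fun y => ?_ : D = 0)⟩
  have hD : ∀ x, D x ∈ K ∙ A x := fun x =>
    sub_mem (h x) (smul_mem _ c (mem_span_singleton_self _))
  have hDx₀ : D x₀ = 0 := by simp [D, hc]
  by_cases hdep : A y ∈ K ∙ A x₀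
  · -- `D (y - a • x₀) = D y` lies on the line through `A (y - a • x₀) = 0`.
    obtain ⟨a, ha⟩ := mem_span_singleton.1 hdep
    simpa [ha, hDx₀] using hD (y - a • x₀)
  · obtain ⟨μ, hμ⟩ := mem_span_singleton.1 (hD y)
    obtain ⟨ν, hν⟩ := mem_span_singleton.1 (hD (x₀ + y))
    have hind : LinearIndependent K ![A x₀, A y] :=
      (LinearIndependent.pair_iff' hx₀).2 fun a ha => hdep (mem_span_singleton.2 ⟨a, ha⟩)
    have hrel : (-ν) • A x₀ + (μ - ν) • A y = 0 := by
      rw [map_add D, hDx₀, zero_add, ← hμ, map_add A] at hν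
      linear_combination (norm := module) -hν
    obtain ⟨hν0, hμν⟩ := LinearIndependent.pair_iff.1 hind _ _ hrel
    rw [zero_apply, ← hμ, sub_eq_zero.1 hμν, neg_eq_zero.1 hν0, zero_smul]

end LinearMap

namespace SeparatingDual

variable {R V : Type*} [Field R] [TopologicalSpace R] [IsTopologicalRing R]
  [AddCommGroup V] [TopologicalSpace V] [Module R V] [SeparatingDual R V]

theorem exists_apply_smul_eq_self (u : V) : ∃ g : StrongDual R V, g u • u = u := by
  rcases eq_or_ne u 0 with rfl | hu
  · exact ⟨0, smul_zero _⟩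
  obtain ⟨g, hg⟩ := exists_eq_one (R := R) hu
  exact ⟨g, by rw [hg, one_smul]⟩

theorem exists_eq_one_eq_zero_ne_zero {x u v : V} (hx : x ∉ R ∙ u) (hv : v ∉ R ∙ u) :
    ∃ f : StrongDual R V, f x = 1 ∧ f u = 0 ∧ f v ≠ 0 := by
  obtain ⟨g, hg⟩ := exists_apply_smul_eq_self (R := R) u
  have hproj : ∀ y : V, y ∉ R ∙ u → y - g y • u ≠ 0 := fun y hy h0 =>
    hy (mem_span_singleton.2 ⟨g y, (sub_eq_zero.1 h0).symm⟩)
  obtain ⟨φ, hφx, hφv⟩ :=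
    exists_eq_one_ne_zero_of_ne_zero_pair (R := R) (hproj x hx) (hproj v hv)
  have hgu : g u * φ u = φ u := by simpa using congrArg φ hg
  refine ⟨φ - φ u • g, ?_, ?_, ?_⟩
  · simpa [mul_comm] using hφx
  · simp [mul_comm, hgu]
  · simpa [mul_comm] using hφv

theorem mem_span_singleton_of_forall_apply_eq_one {x u v : V} (hx : x ≠ 0)
    (h : ∀ f : StrongDual R V, f x = 1 → (f u = 0 ↔ f v = 0)) : v ∈ R ∙ u := by
  have key : ∀ {u v : V}, (∀ f : StrongDual R V, f x = 1 → (f u = 0 ↔ f v = 0)) →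
      v ∉ R ∙ u → x ∈ R ∙ u := fun huv hv => by
    by_contra hxu
    obtain ⟨f, hfx, hfu, hfv⟩ := exists_eq_one_eq_zero_ne_zero hxu hv
    exact hfv ((huv f hfx).1 hfu)
  have span_eq : ∀ {w : V}, x ∈ R ∙ w → (R ∙ x) = R ∙ w := fun hw => by
    obtain ⟨s, rfl⟩ := mem_span_singleton.1 hw
    exact span_singleton_smul_eq (Ne.isUnit (left_ne_zero_of_smul hx)) _
  by_contra hvu
  have hxu : x ∈ R ∙ u := key h hvu
  have hxv : x ∉ R ∙ v := fun hxv =>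
    hvu (span_eq hxu ▸ span_eq hxv ▸ mem_span_singleton_self v)
  have huv : u ∉ R ∙ v := fun huv => hxv ((span_singleton_le_iff_mem _ _).2 huv hxu)
  exact hxv (key (fun f hf => (h f hf).symm) huv)

end SeparatingDual

theorem eq_smul_of_orthogonality_equiv_general
    {X : Type*} [NormedAddCommGroup X] [NormedSpace ℂ X]
    (A A' : X →L[ℂ] X)
    (h : ∀ (x : X) (f : X →L[ℂ] ℂ), f x = 1 → (f (A x) = 0 ↔ f (A' x) = 0)) :
    ∃ lam : ℂ, A' = lam • A := by
  have pointwise : ∀ x, A' x ∈ ℂ ∙ A x := fun x => by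
    rcases eq_or_ne x 0 with rfl | hx
    · simp
    exact SeparatingDual.mem_span_singleton_of_forall_apply_eq_one hx (h x)
  obtain ⟨c, hc⟩ :=
    LinearMap.exists_eq_smul_of_forall_mem_span_singleton (A := (A : X →ₗ[ℂ] X)) pointwise
  exact ⟨c, ContinuousLinearMap.coe_injective hc⟩

/-- Lemma 3.2: if for all `x ∈ X` and `f ∈ X*` with `f x = 1` one has
`f (A x) = 0 ↔ f (A' x) = 0`, then `A' = λ A` for some scalar `λ`. -/
theorem eq_smul_of_orthogonality_equiv
    {X : Type*} [NormedAddCommGroup X] [NormedSpace ℂ X] [CompleteSpace X]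
    (A A' : X →L[ℂ] X)
    (h : ∀ (x : X) (f : X →L[ℂ] ℂ), f x = 1 → (f (A x) = 0 ↔ f (A' x) = 0)) :
    ∃ lam : ℂ, A' = lam • A :=
  eq_smul_of_orthogonality_equiv_general A A' h
end
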